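/- Assume (A0) and assumption (A1): Σ_{k≥1} 1/a_k = ∞. If there exists an admissible solution ρ of the stable traffic equation with Σ_{k≥0} ρ_k < ∞, then v_0 = 0, 0 ∈ 𝒱, and Σ_{k≥0} α_k < ∞. -/
import Mathlib


open Finset Filter Topology MeasureTheory
open scoped ENNReal

/-- `alphaSeq a b k = (a_1 ⋯ a_k)/(b_1 ⋯ b_k)`, with `alphaSeq a b 0 = 1`. -/
noncomputable def alphaSeq (a b : ℕ → ℝ) (k : ℕ) : ℝ :=
  ∏ i ∈ Finset.Icc 1 k, (a i / b i)

/-- `betaSeq a b k = 1/b_k + a_k/(b_k b_{k-1}) + ⋯ + (a_k ⋯ a_2)/(b_k ⋯ b_1)`,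
with `betaSeq a b 0 = 0`. -/
noncomputable def betaSeq (a b : ℕ → ℝ) (k : ℕ) : ℝ :=
  ∑ j ∈ Finset.Icc 1 k, (∏ i ∈ Finset.Icc (j+1) k, a i) / (∏ i ∈ Finset.Icc j k, b i)

/-- The stable traffic equation: `ρ 0 = 1` and
`(b_i + a_{i+1}) ρ_i = a_i ρ_{i-1} + b_{i+1} ρ_{i+1}` for all `i ≥ 1`. -/
def IsSTE (a b : ℕ → ℝ) (ρ : ℕ → ℝ) : Prop :=
  ρ 0 = 1 ∧ ∀ i, 1 ≤ i → (b i + a (i+1)) * ρ i = a i * ρ (i-1) + b (i+1) * ρ (i+1)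

/-- An admissible solution of the stable traffic equation: moreover `ρ k ∈ (0,1)` for `k ≥ 1`. -/
def IsAdmissible (a b : ℕ → ℝ) (ρ : ℕ → ℝ) : Prop :=
  IsSTE a b ρ ∧ ∀ k, 1 ≤ k → ρ k ∈ Set.Ioo (0:ℝ) 1

/-- The set `𝒱` of `v` such that `α + v β` is an admissible solution. -/
def speedSet (a b : ℕ → ℝ) : Set ℝ :=
  {v : ℝ | IsAdmissible a b (fun k => alphaSeq a b k + v * betaSeq a b k)}

lemma alphaSeq_zero (a b : ℕ → ℝ) : alphaSeq a b 0 = 1 := by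
  simp [alphaSeq]

lemma alphaSeq_succ (a b : ℕ → ℝ) (k : ℕ) :
    alphaSeq a b (k+1) = alphaSeq a b k * (a (k+1) / b (k+1)) := by
  rw [alphaSeq, Finset.prod_Icc_succ_top (by omega)]
  rfl

lemma betaSeq_zero (a b : ℕ → ℝ) : betaSeq a b 0 = 0 := by
  simp [betaSeq]

lemma betaSeq_succ (a b : ℕ → ℝ) (k : ℕ) :
    betaSeq a b (k+1) = (a (k+1) / b (k+1)) * betaSeq a b k + 1 / b (k+1) := by
  rw [betaSeq, Finset.sum_Icc_succ_top (by omega)]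
  have hlast : (∏ i ∈ Finset.Icc (k+1+1) (k+1), a i) / (∏ i ∈ Finset.Icc (k+1) (k+1), b i)
      = 1 / b (k+1) := by
    rw [Finset.Icc_eq_empty (by omega), Finset.Icc_self]
    simp
  rw [hlast, betaSeq, Finset.mul_sum]
  congr 1
  refine Finset.sum_congr rfl (fun j hj => ?_)
  have hj1 : 1 ≤ j ∧ j ≤ k := by simpa using hj
  rw [Finset.prod_Icc_succ_top (by omega), Finset.prod_Icc_succ_top (by omega)]
  rw [div_mul_div_comm]
  ring

lemma alphaSeq_pos (a b : ℕ → ℝ) (ha : ∀ k, 1 ≤ k → 0 < a k) (hb : ∀ k, 1 ≤ k → 0 < b k)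
    (k : ℕ) : 0 < alphaSeq a b k := by
  induction k with
  | zero => simp [alphaSeq_zero]
  | succ n ih =>
    rw [alphaSeq_succ]
    exact mul_pos ih (div_pos (ha _ (by omega)) (hb _ (by omega)))

lemma betaSeq_nonneg (a b : ℕ → ℝ) (ha : ∀ k, 1 ≤ k → 0 < a k) (hb : ∀ k, 1 ≤ k → 0 < b k)
    (k : ℕ) : 0 ≤ betaSeq a b k := by
  induction k with
  | zero => simp [betaSeq_zero]
  | succ n ih =>
    rw [betaSeq_succ]
    have h1 : 0 < a (n+1) / b (n+1) := div_pos (ha _ (by omega)) (hb _ (by omega))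
    have h2 : (0:ℝ) < b (n+1) := hb _ (by omega)
    have h3 : (0:ℝ) < 1 / b (n+1) := by positivity
    nlinarith

lemma betaSeq_pos (a b : ℕ → ℝ) (ha : ∀ k, 1 ≤ k → 0 < a k) (hb : ∀ k, 1 ≤ k → 0 < b k)
    (k : ℕ) (hk : 1 ≤ k) : 0 < betaSeq a b k := by
  obtain ⟨n, rfl⟩ := Nat.exists_eq_add_of_le hk
  rw [add_comm, betaSeq_succ]
  have h1 : 0 < a (n+1) / b (n+1) := div_pos (ha _ (by omega)) (hb _ (by omega))
  have h2 : (0:ℝ) < b (n+1) := hb _ (by omega)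
  have h3 : (0:ℝ) < 1 / b (n+1) := by positivity
  have h4 := betaSeq_nonneg a b ha hb n
  nlinarith

/-- Under (A0) and (A1), if there is an admissible solution rho with
summable rho, then v0 = 0, 0 ∈ 𝒱, and alpha is summable. -/
theorem stmt9 (a b : ℕ → ℝ) (ha : ∀ k, 1 ≤ k → 0 < a k) (hb : ∀ k, 1 ≤ k → 0 < b k)
    (hA1 : ¬ Summable (fun k : ℕ => 1 / a (k+1)))
    (v0 : ℝ)
    (hv0 : Filter.Tendsto (fun k => alphaSeq a b k / betaSeq a b k) Filter.atTop (𝓝 (-v0)))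
    (ρ : ℕ → ℝ) (hadm : IsAdmissible a b ρ) (hsum : Summable ρ) :
    v0 = 0 ∧ (0 : ℝ) ∈ speedSet a b ∧ Summable (alphaSeq a b) := by
  obtain ⟨⟨hρ0, hste⟩, hmem⟩ := hadm
  have hρpos : ∀ k, 0 < ρ k := by
    intro k
    rcases Nat.eq_zero_or_pos k with h | h
    · rw [h, hρ0]; norm_num
    · exact (hmem k h).1
  set c : ℝ := b 1 * ρ 1 - a 1 * ρ 0 with hc
  -- constant flux (shifted form)
  have hflux : ∀ i : ℕ, b (i+1) * ρ (i+1) = a (i+1) * ρ i + c := by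
    intro i
    induction i with
    | zero => rw [hc]; ring
    | succ n ih =>
      have hs := hste (n+1) (by omega)
      have h1 : (n+1) - 1 = n := by omega
      rw [h1] at hs
      linarith
  -- c is nonnegative
  have hc0 : 0 ≤ c := by
    by_contra hcneg
    push_neg at hcneg
    apply hA1
    have key : ∀ k : ℕ, 1 / a (k+1) ≤ ρ k * (1 / (-c)) := by
      intro k
      have hf := hflux k
      have hb1 := hb (k+1) (by omega)
      have ha1 := ha (k+1) (by omega)
      have hρ1 := hρpos (k+1)
      have hρk := hρpos k
      have h2 : -c ≤ a (k+1) * ρ k := by nlinarith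
      rw [mul_one_div, div_le_div_iff₀ ha1 (by linarith : (0:ℝ) < -c)]
      nlinarith
    refine Summable.of_nonneg_of_le (fun k => ?_) key (hsum.mul_right _)
    have := ha (k+1) (by omega)
    positivity
  -- representation ρ = α + c β
  have hrep : ∀ k, ρ k = alphaSeq a b k + c * betaSeq a b k := by
    intro k
    induction k with
    | zero => rw [hρ0, alphaSeq_zero, betaSeq_zero]; ring
    | succ n ih =>
      have hf := hflux n
      rw [ih] at hf
      have hb1 : b (n+1) ≠ 0 := (hb (n+1) (by omega)).ne'
      rw [alphaSeq_succ, betaSeq_succ]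
      field_simp
      linear_combination hf
  -- α ≤ ρ and α < 1
  have hαle : ∀ k, alphaSeq a b k ≤ ρ k := by
    intro k
    rw [hrep k]
    nlinarith [mul_nonneg hc0 (betaSeq_nonneg a b ha hb k)]
  have hαlt1 : ∀ k, 1 ≤ k → alphaSeq a b k < 1 := by
    intro k hk
    exact lt_of_le_of_lt (hαle k) (hmem k hk).2
  have hαle1 : ∀ k, alphaSeq a b k ≤ 1 := by
    intro k
    rcases Nat.eq_zero_or_pos k with h | h
    · rw [h, alphaSeq_zero]
    · exact (hαlt1 k h).le
  have hαpos := alphaSeq_pos a b ha hb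
  -- summability of α
  have hsumα : Summable (alphaSeq a b) :=
    Summable.of_nonneg_of_le (fun k => (hαpos k).le) hαle hsum
  -- 0 ∈ speedSet
  have hmemV : (0:ℝ) ∈ speedSet a b := by
    refine ⟨⟨?_, ?_⟩, ?_⟩
    · simp [alphaSeq_zero, betaSeq_zero]
    · intro i hi
      rcases i with _ | j
      · omega
      simp only [zero_mul, add_zero, Nat.succ_sub_one]
      have h1 := alphaSeq_succ a b j
      have h2 := alphaSeq_succ a b (j+1)
      have hbj1 : b (j+1) ≠ 0 := (hb (j+1) (by omega)).ne'
      have hbj2 : b (j+1+1) ≠ 0 := (hb (j+2) (by omega)).ne'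
      rw [h2, h1]
      field_simp
    · intro k hk
      simp only [zero_mul, add_zero]
      exact ⟨hαpos k, hαlt1 k hk⟩
  -- v0 = 0
  have hT : Tendsto (fun n : ℕ => ∑ j ∈ Finset.range n, 1 / a (j+1)) atTop atTop := by
    refine (not_summable_iff_tendsto_nat_atTop_of_nonneg (fun n => ?_)).mp hA1
    have := ha (n+1) (by omega)
    positivity
  have hkey : ∀ k, alphaSeq a b k * (∑ j ∈ Finset.range k, 1 / a (j+1)) ≤ betaSeq a b k := by
    intro k
    induction k with
    | zero => simp [betaSeq_zero]
    | succ n ih =>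
      rw [Finset.sum_range_succ, alphaSeq_succ, betaSeq_succ]
      have ha1 := ha (n+1) (by omega)
      have hb1 := hb (n+1) (by omega)
      have hαn := hαpos n
      have hα1 := hαle1 n
      have e1 : alphaSeq a b n * (a (n+1) / b (n+1)) *
          ((∑ j ∈ Finset.range n, 1 / a (j+1)) + 1 / a (n+1))
          = (a (n+1) / b (n+1)) * (alphaSeq a b n * ∑ j ∈ Finset.range n, 1 / a (j+1))
            + alphaSeq a b n * (1 / b (n+1)) := by
        field_simp
      rw [e1]
      have h2 : (a (n+1) / b (n+1)) * (alphaSeq a b n * ∑ j ∈ Finset.range n, 1 / a (j+1))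
          ≤ (a (n+1) / b (n+1)) * betaSeq a b n :=
        mul_le_mul_of_nonneg_left ih (by positivity)
      have h3 : alphaSeq a b n * (1 / b (n+1)) ≤ 1 / b (n+1) := by
        nlinarith [one_div_pos.mpr hb1]
      linarith
  have hsq : Tendsto (fun k => alphaSeq a b k / betaSeq a b k) atTop (𝓝 0) := by
    refine tendsto_of_tendsto_of_tendsto_of_le_of_le' tendsto_const_nhds
      hT.inv_tendsto_atTop ?_ ?_
    · filter_upwards [eventually_ge_atTop 1] with k hk
      exact (div_pos (hαpos k) (betaSeq_pos a b ha hb k hk)).le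
    · filter_upwards [eventually_ge_atTop 1, hT.eventually_ge_atTop 1] with k hk hTk
      have hβ := betaSeq_pos a b ha hb k hk
      have hTpos : (0:ℝ) < ∑ j ∈ Finset.range k, 1 / a (j+1) := by linarith
      rw [Pi.inv_apply, inv_eq_one_div, div_le_div_iff₀ hβ hTpos]
      nlinarith [hkey k]
  have hv00 : -v0 = 0 := tendsto_nhds_unique hv0 hsq
  exact ⟨by linarith, hmemV, hsumα⟩
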